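/- arXiv:2102.08632 — 3 statements merged into one kernel-verified Lean document; each statement's English description precedes it below -/
import Mathlib

section
/- Let f, g be measurable functions on a set C of finite positive measure, and let U be uniform on C. Define Z(f) = |f(U)| − E[|f(U)|] and similarly Z(g). Then Var(Z(f) − Z(g)) ≤ (1/|C|) · ‖f − g‖_{L^∞(C)} · (∫_C |f| + ∫_C |g|). -/
open MeasureTheory ProbabilityTheory

lemma variance_sub_const_aux {Ω : Type*} [MeasurableSpace Ω] (μ : Measure Ω)
    [IsProbabilityMeasure μ] {Y : Ω → ℝ} (hY : Integrable Y μ) (c : ℝ) :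
    variance (fun ω => Y ω - c) μ = variance Y μ := by
  have h1 : μ[fun ω => Y ω - c] = μ[Y] - c := by
    rw [integral_sub hY (integrable_const c), integral_const]; simp
  simp only [variance, evariance, h1, sub_sub_sub_cancel_right]

theorem variance_of_difference_bound (d : ℕ) (C : Set (Fin d → ℝ))
    (hCm : MeasurableSet C) (h0 : 0 < volume C) (h1 : volume C < ⊤)
    (f g : (Fin d → ℝ) → ℝ) (hf : Measurable f) (hg : Measurable g)
    (Mf Mg : ℝ) (hMf : ∀ x ∈ C, |f x| ≤ Mf) (hMg : ∀ x ∈ C, |g x| ≤ Mg) :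
    let μ : Measure (Fin d → ℝ) := (volume C)⁻¹ • volume.restrict C
    variance (fun u => (|f u| - ∫ u, |f u| ∂μ) - (|g u| - ∫ u, |g u| ∂μ)) μ
      ≤ (volume C).toReal⁻¹ * (eLpNorm (fun x => f x - g x) ⊤ (volume.restrict C)).toReal *
        ((∫ x in C, |f x|) + ∫ x in C, |g x|) := by
  intro μ
  have hC0 : volume C ≠ 0 := h0.ne'
  have hCt : volume C ≠ ⊤ := h1.ne
  have hprob : IsProbabilityMeasure μ := by
    constructor
    simp [μ, Measure.smul_apply, Measure.restrict_apply_univ, smul_eq_mul,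
      ENNReal.inv_mul_cancel hC0 hCt]
  set ν := volume.restrict C with hν
  set K := (eLpNorm (fun x => f x - g x) ⊤ ν).toReal with hK
  have haeν : ∀ᵐ x ∂ν, x ∈ C := ae_restrict_mem hCm
  have haeμ : ∀ᵐ x ∂μ, x ∈ C := Measure.ae_smul_measure haeν _
  -- finiteness of the eLpNorm
  have hbound : ∀ᵐ x ∂ν, ‖f x - g x‖ ≤ Mf + Mg := by
    filter_upwards [haeν] with x hx
    calc ‖f x - g x‖ = |f x - g x| := rfl
      _ ≤ |f x| + |g x| := abs_sub _ _
      _ ≤ Mf + Mg := add_le_add (hMf x hx) (hMg x hx)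
  have hKlt : eLpNorm (fun x => f x - g x) ⊤ ν < ⊤ :=
    lt_of_le_of_lt (eLpNorm_le_of_ae_bound hbound) (by simp [ENNReal.ofReal_lt_top])
  have hKν : ∀ᵐ x ∂ν, |f x - g x| ≤ K := by
    have h := enorm_ae_le_eLpNormEssSup (fun x => f x - g x) ν
    filter_upwards [h] with x hx
    have hx' : (‖f x - g x‖₊ : ENNReal) ≤ eLpNorm (fun x => f x - g x) ⊤ ν := by
      rwa [eLpNorm_exponent_top]
    have := ENNReal.toReal_mono hKlt.ne hx'
    simpa [Real.norm_eq_abs, hK] using this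
  have hKμ : ∀ᵐ x ∂μ, |f x - g x| ≤ K := Measure.ae_smul_measure hKν _
  -- integrability
  have hfa : ∀ᵐ x ∂μ, ‖|f x|‖ ≤ Mf := by
    filter_upwards [haeμ] with x hx; simpa [abs_abs] using hMf x hx
  have hga : ∀ᵐ x ∂μ, ‖|g x|‖ ≤ Mg := by
    filter_upwards [haeμ] with x hx; simpa [abs_abs] using hMg x hx
  have hfint : Integrable (fun u => |f u|) μ :=
    memLp_one_iff_integrable.mp (MemLp.of_bound hf.abs.aestronglyMeasurable Mf hfa)
  have hgint : Integrable (fun u => |g u|) μ :=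
    memLp_one_iff_integrable.mp (MemLp.of_bound hg.abs.aestronglyMeasurable Mg hga)
  set Y : (Fin d → ℝ) → ℝ := fun u => |f u| - |g u| with hYdef
  set a := ∫ u, |f u| ∂μ with ha
  set b := ∫ u, |g u| ∂μ with hb
  have hYint : Integrable Y μ := hfint.sub hgint
  have hXY : (fun u => (|f u| - a) - (|g u| - b)) = fun u => Y u - (a - b) := by
    funext u; simp [hYdef]; ring
  rw [hXY, variance_sub_const_aux μ hYint (a - b)]
  have hYsm : AEStronglyMeasurable Y μ := (hf.abs.sub hg.abs).aestronglyMeasurable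
  have step1 : variance Y μ ≤ μ[Y ^ 2] := variance_le_expectation_sq hYsm
  have hY2int : Integrable (Y ^ 2) μ := by
    refine memLp_one_iff_integrable.mp (MemLp.of_bound ?_ ((Mf + Mg)^2) ?_)
    · exact ((hf.abs.sub hg.abs).pow_const 2).aestronglyMeasurable
    · filter_upwards [haeμ] with x hx
      have h1 : |Y x| ≤ Mf + Mg :=
        (abs_sub _ _).trans (by simpa [abs_abs] using add_le_add (hMf x hx) (hMg x hx))
      have h0 : (0:ℝ) ≤ Mf + Mg := le_trans (abs_nonneg _) h1
      calc ‖(Y ^ 2) x‖ = |Y x| ^ 2 := by simp [sq_abs, abs_pow]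
        _ ≤ (Mf + Mg) ^ 2 := pow_le_pow_left₀ (abs_nonneg _) h1 2
  have hrint : Integrable (fun u => K * (|f u| + |g u|)) μ :=
    ((hfint.add hgint).const_mul K)
  have step2 : μ[Y ^ 2] ≤ ∫ u, K * (|f u| + |g u|) ∂μ := by
    refine integral_mono_ae hY2int hrint ?_
    filter_upwards [hKμ] with u hu
    have h1 : |Y u| ≤ |f u - g u| := by simpa using abs_abs_sub_abs_le_abs_sub (f u) (g u)
    have h2 : |Y u| ≤ |f u| + |g u| := (abs_sub _ _).trans (by simp [abs_abs])
    calc (Y ^ 2) u = |Y u| * |Y u| := by simp [sq, Pi.pow_apply, abs_mul_abs_self]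
      _ ≤ |f u - g u| * (|f u| + |g u|) :=
        mul_le_mul h1 h2 (abs_nonneg _) (abs_nonneg _)
      _ ≤ K * (|f u| + |g u|) :=
        mul_le_mul_of_nonneg_right hu (add_nonneg (abs_nonneg _) (abs_nonneg _))
  have hintf : (∫ u, |f u| ∂μ) = (volume C).toReal⁻¹ * ∫ x in C, |f x| := by
    rw [show μ = (volume C)⁻¹ • ν from rfl, integral_smul_measure, ENNReal.toReal_inv,
      smul_eq_mul]
  have hintg : (∫ u, |g u| ∂μ) = (volume C).toReal⁻¹ * ∫ x in C, |g x| := by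
    rw [show μ = (volume C)⁻¹ • ν from rfl, integral_smul_measure, ENNReal.toReal_inv,
      smul_eq_mul]
  have step3 : ∫ u, K * (|f u| + |g u|) ∂μ
      = (volume C).toReal⁻¹ * K * ((∫ x in C, |f x|) + ∫ x in C, |g x|) := by
    rw [integral_const_mul, integral_add hfint hgint, hintf, hintg]
    ring
  calc variance Y μ ≤ μ[Y ^ 2] := step1
    _ ≤ ∫ u, K * (|f u| + |g u|) ∂μ := step2
    _ = (volume C).toReal⁻¹ * K * ((∫ x in C, |f x|) + ∫ x in C, |g x|) := step3
end

section
/- For all real u > 1 and v > 0 with uv·log u > 0, the series Σ_{r=2}^∞ exp(−u^r v) converges and is bounded above by exp(−u v) / (u v log u). -/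
/-! The estimate `u ^ n ≥ 1 + n log u` (from `exp x ≥ 1 + x`) dominates the series termwise by the
geometric series `exp (-u v) ∑_{n ≥ 1} q ^ n` with `q = exp (-u v log u)`, whose sum
`exp (-u v) / (exp (u v log u) - 1)` is at most `exp (-u v) / (u v log u)`. -/

open Real

lemma one_add_nat_mul_log_le_pow {u : ℝ} (hu : 0 < u) (n : ℕ) : 1 + n * log u ≤ u ^ n :=
  calc 1 + n * log u ≤ exp (n * log u) := by linarith [add_one_le_exp (n * log u)]
    _ = u ^ n := by rw [exp_nat_mul, exp_log hu]

lemma exp_neg_pow_succ_mul_le {u v : ℝ} (hu : 0 < u) (hv : 0 ≤ v) (n : ℕ) :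
    exp (-(u ^ (n + 1) * v)) ≤ exp (-(u * v)) * exp (-(u * v * log u)) ^ n := by
  rw [← exp_nat_mul, ← exp_add, exp_le_exp]
  linear_combination
    mul_le_mul_of_nonneg_left (one_add_nat_mul_log_le_pow hu n) (by positivity : 0 ≤ u * v)

lemma tsum_exp_neg_pow_succ_le_inv {a : ℝ} (ha : 0 < a) :
    ∑' n : ℕ, exp (-a) ^ (n + 1) ≤ a⁻¹ := by
  have hq1 : exp (-a) < 1 := exp_lt_one_iff.2 (neg_lt_zero.2 ha)
  calc ∑' n : ℕ, exp (-a) ^ (n + 1) = exp (-a) * (1 - exp (-a))⁻¹ := by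
        simp_rw [pow_succ']
        rw [tsum_mul_left, tsum_geometric_of_lt_one (exp_pos _).le hq1]
    _ = (exp a - 1)⁻¹ := by
        rw [exp_neg]
        field_simp
    _ ≤ a⁻¹ := inv_anti₀ ha (by linarith [add_one_le_exp a])

theorem series_exp_pow_estimate_general (u v : ℝ) (hu : 1 < u) (hv : 0 < v) :
    Summable (fun r : ℕ => exp (-(u ^ (r + 2) * v))) ∧
    ∑' r : ℕ, exp (-(u ^ (r + 2) * v)) ≤ exp (-(u * v)) / (u * v * log u) := by
  set q := exp (-(u * v * log u))
  have ha : 0 < u * v * log u := by have := log_pos hu; positivity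
  have hterm (r : ℕ) : exp (-(u ^ (r + 2) * v)) ≤ exp (-(u * v)) * q ^ (r + 1) :=
    exp_neg_pow_succ_mul_le (by linarith) hv.le (r + 1)
  have hgeom : Summable (fun r : ℕ => exp (-(u * v)) * q ^ (r + 1)) :=
    ((summable_geometric_of_lt_one (exp_pos _).le (exp_lt_one_iff.2 (by linarith))).comp_injective
      (add_left_injective 1)).mul_left _
  have hsum := hgeom.of_nonneg_of_le (fun r => (exp_pos _).le) hterm
  refine ⟨hsum, ?_⟩
  calc ∑' r : ℕ, exp (-(u ^ (r + 2) * v)) ≤ ∑' r : ℕ, exp (-(u * v)) * q ^ (r + 1) :=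
        hsum.tsum_le_tsum hterm hgeom
    _ = exp (-(u * v)) * ∑' r : ℕ, q ^ (r + 1) := tsum_mul_left
    _ ≤ exp (-(u * v)) / (u * v * log u) := by
        rw [div_eq_mul_inv]
        exact mul_le_mul_of_nonneg_left (tsum_exp_neg_pow_succ_le_inv ha) (exp_pos _).le

theorem series_exp_pow_estimate (u v : ℝ) (hu : 1 < u) (hv : 0 < v)
    (hpos : 0 < u * v * log u) :
    Summable (fun r : ℕ => exp (-(u ^ (r + 2) * v))) ∧
    ∑' r : ℕ, exp (-(u ^ (r + 2) * v)) ≤ exp (-(u * v)) / (u * v * log u) :=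
  series_exp_pow_estimate_general u v hu hv
end

section
/- Let φ : ℝ^{n+1} → ℝ satisfy |φ(x,y)| ≤ C e^{−(‖x‖₂² + |y|²)}, and let Λ ⊂ ℝ^{n+1} be a separated set with inf_{v≠v'∈Λ} ‖v − v'‖ ≥ 2/3. Then the kernel K(x,y,s,t) = Σ_{(α,β)∈Λ} φ(x−α, y−β) φ(s−α, t−β) satisfies a Gaussian off-diagonal decay bound: |K(x,y,s,t)| ≤ C' e^{−(1/4)(‖x−s‖₂ + |y−t|)²} for some constant C' depending only on C, n and the separation of Λ. -/
open Real

open Real MeasureTheory Metric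
open scoped ENNReal

lemma aux_integrable (n : ℕ) :
    Integrable (fun y : EuclideanSpace ℝ (Fin n) × ℝ =>
      exp (-(‖y.1‖ ^ 2 + |y.2| ^ 2))) := by
  have h1 : Integrable (fun x : EuclideanSpace ℝ (Fin n) => exp (-‖x‖ ^ 2)) := by
    have h := (GaussianFourier.integrable_cexp_neg_mul_sq_norm_add
      (V := EuclideanSpace ℝ (Fin n)) (b := (1 : ℂ)) (by norm_num) 0 0).norm
    refine h.congr ?_
    filter_upwards with x
    rw [Complex.norm_exp]
    simp only [zero_mul, add_zero, neg_mul, one_mul, Complex.neg_re,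
      ← Complex.ofReal_pow, Complex.ofReal_re]

  have h2 : Integrable (fun t : ℝ => exp (-|t| ^ 2)) := by
    have h := integrable_exp_neg_mul_sq (b := 1) one_pos
    refine h.congr ?_
    filter_upwards with t
    rw [sq_abs, neg_mul, one_mul]
  have h3 := h1.mul_prod h2
  refine h3.congr ?_
  filter_upwards with y
  rw [← Real.exp_add, neg_add]

lemma aux_gauss_sum (n : ℕ) (Λ : Set (EuclideanSpace ℝ (Fin n) × ℝ))
    (hΛ : ∀ v ∈ Λ, ∀ v' ∈ Λ, v ≠ v' → (2 : ℝ) / 3 ≤ ‖v - v'‖) :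
    ∃ B : ℝ, 0 ≤ B ∧ ∀ u : EuclideanSpace ℝ (Fin n) × ℝ,
      ∀ F : Finset Λ, ∑ v ∈ F,
        exp (-(2 * (‖((v : EuclideanSpace ℝ (Fin n) × ℝ) - u).1‖ ^ 2
          + |((v : EuclideanSpace ℝ (Fin n) × ℝ) - u).2| ^ 2))) ≤ B := by
  haveI : Measure.IsAddHaarMeasure (volume : Measure (EuclideanSpace ℝ (Fin n) × ℝ)) :=
    inferInstanceAs (Measure.IsAddHaarMeasure
      ((volume : Measure (EuclideanSpace ℝ (Fin n))).prod volume))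
  set κ : ℝ≥0∞ := volume (ball (0 : EuclideanSpace ℝ (Fin n) × ℝ) (1/3)) with hκ
  have κpos : 0 < κ := measure_ball_pos _ _ (by norm_num)
  have κfin : κ ≠ ∞ := (measure_ball_lt_top).ne
  have κtpos : 0 < κ.toReal := ENNReal.toReal_pos κpos.ne' κfin
  set I₀ : ℝ := ∫ y : EuclideanSpace ℝ (Fin n) × ℝ, exp (-(‖y.1‖ ^ 2 + |y.2| ^ 2)) with hI₀
  have I₀nonneg : 0 ≤ I₀ := integral_nonneg fun y => (exp_pos _).le
  refine ⟨exp (4/9) * (κ.toReal⁻¹ * I₀), by positivity, fun u F => ?_⟩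
  have key : ∀ v : Λ, exp (-(2 * (‖((v : EuclideanSpace ℝ (Fin n) × ℝ) - u).1‖ ^ 2
      + |((v : EuclideanSpace ℝ (Fin n) × ℝ) - u).2| ^ 2)))
      ≤ exp (4/9) * κ.toReal⁻¹ *
        ∫ y in ball ((v : EuclideanSpace ℝ (Fin n) × ℝ) - u) (1/3),
          exp (-(‖y.1‖ ^ 2 + |y.2| ^ 2)) := by
    intro v
    set p : EuclideanSpace ℝ (Fin n) × ℝ := (v : EuclideanSpace ℝ (Fin n) × ℝ) - u with hp
    set X : ℝ := exp (-(2 * (‖p.1‖ ^ 2 + |p.2| ^ 2))) with hX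
    have hball : exp (-(4/9)) * X * κ.toReal
        ≤ ∫ y in ball p (1/3), exp (-(‖y.1‖ ^ 2 + |y.2| ^ 2)) := by
      have h := setIntegral_ge_of_const_le (μ := volume)
        (c := exp (-(4/9)) * X) (s := ball p (1/3))
        (f := fun y : EuclideanSpace ℝ (Fin n) × ℝ => exp (-(‖y.1‖ ^ 2 + |y.2| ^ 2)))
        measurableSet_ball measure_ball_lt_top.ne
        (fun y hy => ?_) ((aux_integrable n).integrableOn)
      · rw [measureReal_def, Measure.addHaar_ball_center volume p (1/3), ← hκ, smul_eq_mul] at h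
        linarith [h]
      · rw [hX, ← Real.exp_add, Real.exp_le_exp]
        have hyp : ‖y - p‖ < 1/3 := by rw [← dist_eq_norm]; exact mem_ball.mp hy
        have hy1 : ‖y.1 - p.1‖ ≤ 1/3 := by
          have h1 := norm_fst_le (y - p)
          simpa using h1.trans hyp.le
        have hy2 : |y.2 - p.2| ≤ 1/3 := by
          have h2 := norm_snd_le (y - p)
          simpa [Real.norm_eq_abs] using h2.trans hyp.le
        have t1 : ‖y.1‖ ≤ ‖p.1‖ + ‖y.1 - p.1‖ := by
          simpa using norm_add_le p.1 (y.1 - p.1)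
        have t2 : |y.2| ≤ |p.2| + |y.2 - p.2| := by
          simpa using abs_add_le p.2 (y.2 - p.2)
        nlinarith [sq_nonneg (‖p.1‖ - ‖y.1 - p.1‖), sq_nonneg (|p.2| - |y.2 - p.2|),
          norm_nonneg (y.1 - p.1), abs_nonneg (y.2 - p.2), norm_nonneg y.1, abs_nonneg y.2,
          norm_nonneg p.1, abs_nonneg p.2]
    have h2 := mul_le_mul_of_nonneg_left hball
      (by positivity : (0:ℝ) ≤ exp (4/9) * κ.toReal⁻¹)
    calc X = exp (4/9) * κ.toReal⁻¹ * (exp (-(4/9)) * X * κ.toReal) := by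
            rw [show exp (4/9) * κ.toReal⁻¹ * (exp (-(4/9)) * X * κ.toReal)
              = (exp (4/9) * exp (-(4/9))) * (κ.toReal⁻¹ * κ.toReal) * X by ring,
              ← Real.exp_add, inv_mul_cancel₀ κtpos.ne']
            norm_num
      _ ≤ _ := h2
  have hdisj : Set.Pairwise (↑F)
      (Function.onFun Disjoint fun v : Λ => ball ((v : EuclideanSpace ℝ (Fin n) × ℝ) - u) (1/3)) := by
    intro v hv v' hv' hne
    have hsep : (2:ℝ)/3 ≤ ‖(v : EuclideanSpace ℝ (Fin n) × ℝ) - (v' : EuclideanSpace ℝ (Fin n) × ℝ)‖ :=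
      hΛ v v.2 v' v'.2 (Subtype.coe_injective.ne hne)
    apply ball_disjoint_ball
    rw [dist_eq_norm, sub_sub_sub_cancel_right]
    linarith
  have hsum : ∑ v ∈ F, ∫ y in ball ((v : EuclideanSpace ℝ (Fin n) × ℝ) - u) (1/3),
      exp (-(‖y.1‖ ^ 2 + |y.2| ^ 2)) ≤ I₀ := by
    rw [← integral_biUnion_finset F (fun v _ => measurableSet_ball) hdisj
      (fun v _ => (aux_integrable n).integrableOn)]
    exact setIntegral_le_integral (aux_integrable n)
      (Filter.Eventually.of_forall fun y => (exp_pos _).le)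
  calc ∑ v ∈ F, exp (-(2 * (‖((v : EuclideanSpace ℝ (Fin n) × ℝ) - u).1‖ ^ 2
        + |((v : EuclideanSpace ℝ (Fin n) × ℝ) - u).2| ^ 2)))
      ≤ ∑ v ∈ F, exp (4/9) * κ.toReal⁻¹ *
        ∫ y in ball ((v : EuclideanSpace ℝ (Fin n) × ℝ) - u) (1/3),
          exp (-(‖y.1‖ ^ 2 + |y.2| ^ 2)) := Finset.sum_le_sum fun v _ => key v
    _ = exp (4/9) * κ.toReal⁻¹ * ∑ v ∈ F, ∫ y in ball ((v : EuclideanSpace ℝ (Fin n) × ℝ) - u) (1/3),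
        exp (-(‖y.1‖ ^ 2 + |y.2| ^ 2)) := by rw [← Finset.mul_sum]
    _ ≤ exp (4/9) * (κ.toReal⁻¹ * I₀) := by
        rw [← mul_assoc]
        exact mul_le_mul_of_nonneg_left hsum (by positivity)


lemma aux_par (n : ℕ) (a b : EuclideanSpace ℝ (Fin n)) :
    ‖a‖ ^ 2 + ‖b‖ ^ 2 = 2 * ‖(1/2 : ℝ) • (a + b)‖ ^ 2 + ‖a - b‖ ^ 2 / 2 := by
  have h := parallelogram_law_with_norm ℝ a b
  have h2 : ‖(1/2 : ℝ) • (a + b)‖ = (1/2) * ‖a + b‖ := by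
    rw [norm_smul]; norm_num
  rw [h2]
  ring_nf
  ring_nf at h
  nlinarith [h]

theorem gaussian_offdiagonal_kernel_decay (n : ℕ) (C : ℝ) (hC : 0 < C)
    (φ : (EuclideanSpace ℝ (Fin n)) × ℝ → ℝ)
    (hφ : ∀ v : EuclideanSpace ℝ (Fin n) × ℝ, |φ v| ≤ C * exp (-(‖v.1‖ ^ 2 + |v.2| ^ 2)))
    (Λ : Set (EuclideanSpace ℝ (Fin n) × ℝ))
    (hΛ : ∀ v ∈ Λ, ∀ v' ∈ Λ, v ≠ v' → (2 : ℝ) / 3 ≤ ‖v - v'‖) :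
    ∃ C' : ℝ, 0 < C' ∧ ∀ w z : EuclideanSpace ℝ (Fin n) × ℝ,
      |∑' v : Λ, φ (w - ↑v) * φ (z - ↑v)|
        ≤ C' * exp (-(1/4) * (‖w.1 - z.1‖ + |w.2 - z.2|) ^ 2) := by
  obtain ⟨B, hB, hBsum⟩ := aux_gauss_sum n Λ hΛ
  refine ⟨C ^ 2 * (B + 1), by positivity, fun w z => ?_⟩
  set u : EuclideanSpace ℝ (Fin n) × ℝ := (1/2 : ℝ) • (w + z) with hu
  set D : ℝ := ‖w.1 - z.1‖ ^ 2 + |w.2 - z.2| ^ 2 with hD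
  set h : Λ → ℝ := fun v =>
    exp (-(2 * (‖((v : EuclideanSpace ℝ (Fin n) × ℝ) - u).1‖ ^ 2
      + |((v : EuclideanSpace ℝ (Fin n) × ℝ) - u).2| ^ 2))) with hh
  have hhnonneg : ∀ v, 0 ≤ h v := fun v => (exp_pos _).le
  have hhsummable : Summable h :=
    summable_of_sum_le hhnonneg (hBsum u)
  have hhtsum : ∑' v, h v ≤ B := hhsummable.tsum_le_of_sum_le (hBsum u)
  set g : Λ → ℝ := fun v => (C ^ 2 * exp (-D / 2)) * h v with hg
  have hgsummable : Summable g := hhsummable.mul_left _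
  -- pointwise bound
  have hkey : ∀ v : Λ, |φ (w - ↑v) * φ (z - ↑v)| ≤ g v := by
    intro v
    have h1 := hφ (w - ↑v)
    have h2 := hφ (z - ↑v)
    have habs : |φ (w - ↑v) * φ (z - ↑v)| = |φ (w - ↑v)| * |φ (z - ↑v)| := abs_mul _ _
    have hprod : |φ (w - ↑v)| * |φ (z - ↑v)|
        ≤ (C * exp (-(‖(w - ↑v).1‖ ^ 2 + |(w - ↑v).2| ^ 2))) *
          (C * exp (-(‖(z - ↑v).1‖ ^ 2 + |(z - ↑v).2| ^ 2))) :=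
      mul_le_mul h1 h2 (abs_nonneg _) (by positivity)
    have hident : (-(‖(w - ↑v).1‖ ^ 2 + |(w - ↑v).2| ^ 2)) +
        (-(‖(z - ↑v).1‖ ^ 2 + |(z - ↑v).2| ^ 2))
        = -D / 2 + (-(2 * (‖((v : EuclideanSpace ℝ (Fin n) × ℝ) - u).1‖ ^ 2
          + |((v : EuclideanSpace ℝ (Fin n) × ℝ) - u).2| ^ 2))) := by
      have e1 : (w - (v : EuclideanSpace ℝ (Fin n) × ℝ)).1 = w.1 - (v : EuclideanSpace ℝ (Fin n) × ℝ).1 := rfl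
      have e2 : (w - (v : EuclideanSpace ℝ (Fin n) × ℝ)).2 = w.2 - (v : EuclideanSpace ℝ (Fin n) × ℝ).2 := rfl
      have e3 : (z - (v : EuclideanSpace ℝ (Fin n) × ℝ)).1 = z.1 - (v : EuclideanSpace ℝ (Fin n) × ℝ).1 := rfl
      have e4 : (z - (v : EuclideanSpace ℝ (Fin n) × ℝ)).2 = z.2 - (v : EuclideanSpace ℝ (Fin n) × ℝ).2 := rfl
      have e5 : ((v : EuclideanSpace ℝ (Fin n) × ℝ) - u).1
          = (v : EuclideanSpace ℝ (Fin n) × ℝ).1 - (1/2 : ℝ) • (w.1 + z.1) := rfl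
      have e6 : ((v : EuclideanSpace ℝ (Fin n) × ℝ) - u).2
          = (v : EuclideanSpace ℝ (Fin n) × ℝ).2 - (1/2) * (w.2 + z.2) := rfl
      set a : EuclideanSpace ℝ (Fin n) := w.1 - (v : EuclideanSpace ℝ (Fin n) × ℝ).1 with ha
      set b : EuclideanSpace ℝ (Fin n) := z.1 - (v : EuclideanSpace ℝ (Fin n) × ℝ).1 with hb
      have hpar := aux_par n a b
      have hab : a - b = w.1 - z.1 := by rw [ha, hb]; abel
      have hmid : (1/2 : ℝ) • (a + b)
          = (1/2 : ℝ) • (w.1 + z.1) - (v : EuclideanSpace ℝ (Fin n) × ℝ).1 := by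
        rw [ha, hb]; module
      have hnorm : ‖(1/2 : ℝ) • (a + b)‖
          = ‖((v : EuclideanSpace ℝ (Fin n) × ℝ) - u).1‖ := by
        rw [hmid, e5, norm_sub_rev]
      rw [hnorm, hab] at hpar
      have hscal : (w.2 - (v : EuclideanSpace ℝ (Fin n) × ℝ).2) ^ 2
          + (z.2 - (v : EuclideanSpace ℝ (Fin n) × ℝ).2) ^ 2
          = 2 * ((v : EuclideanSpace ℝ (Fin n) × ℝ).2 - (1/2) * (w.2 + z.2)) ^ 2
            + (w.2 - z.2) ^ 2 / 2 := by ring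
      rw [hD, e6, e1, e2, e3, e4]
      simp only [sq_abs]
      linarith [hpar, hscal]
    have hgv : (C * exp (-(‖(w - ↑v).1‖ ^ 2 + |(w - ↑v).2| ^ 2))) *
        (C * exp (-(‖(z - ↑v).1‖ ^ 2 + |(z - ↑v).2| ^ 2))) = g v := by
      rw [hg, hh]
      simp only
      rw [show (C * exp (-(‖(w - ↑v).1‖ ^ 2 + |(w - ↑v).2| ^ 2))) *
        (C * exp (-(‖(z - ↑v).1‖ ^ 2 + |(z - ↑v).2| ^ 2)))
        = C ^ 2 * (exp (-(‖(w - ↑v).1‖ ^ 2 + |(w - ↑v).2| ^ 2)) *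
          exp (-(‖(z - ↑v).1‖ ^ 2 + |(z - ↑v).2| ^ 2))) by ring,
        ← Real.exp_add, hident, Real.exp_add]
      ring
    rw [habs]
    calc |φ (w - ↑v)| * |φ (z - ↑v)| ≤ _ := hprod
      _ = g v := hgv
  -- conclude
  have habs_sum : Summable (fun v : Λ => |φ (w - ↑v) * φ (z - ↑v)|) :=
    Summable.of_nonneg_of_le (fun v => abs_nonneg _) hkey hgsummable
  have hfsum : Summable (fun v : Λ => φ (w - ↑v) * φ (z - ↑v)) := habs_sum.of_abs
  have step1 : |∑' v : Λ, φ (w - ↑v) * φ (z - ↑v)|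
      ≤ ∑' v : Λ, |φ (w - ↑v) * φ (z - ↑v)| := by
    rw [abs_le]
    constructor
    · have ht := Summable.tsum_le_tsum (fun v : Λ => neg_abs_le (φ (w - ↑v) * φ (z - ↑v)))
        habs_sum.neg hfsum
      rwa [tsum_neg] at ht
    · exact Summable.tsum_le_tsum (fun v : Λ => le_abs_self _) hfsum habs_sum
  have step2 : ∑' v : Λ, |φ (w - ↑v) * φ (z - ↑v)| ≤ ∑' v, g v :=
    Summable.tsum_le_tsum hkey habs_sum hgsummable
  have step3 : ∑' v, g v = (C ^ 2 * exp (-D / 2)) * ∑' v, h v := tsum_mul_left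
  have step4 : (C ^ 2 * exp (-D / 2)) * ∑' v, h v ≤ (C ^ 2 * exp (-D / 2)) * B :=
    mul_le_mul_of_nonneg_left hhtsum (by positivity)
  have step5 : (C ^ 2 * exp (-D / 2)) * B
      ≤ C ^ 2 * (B + 1) * exp (-(1/4) * (‖w.1 - z.1‖ + |w.2 - z.2|) ^ 2) := by
    have hDS : -(D / 2) ≤ -(1/4) * (‖w.1 - z.1‖ + |w.2 - z.2|) ^ 2 := by
      rw [hD]
      nlinarith [sq_nonneg (‖w.1 - z.1‖ - |w.2 - z.2|)]
    have hexp : exp (-D / 2) ≤ exp (-(1/4) * (‖w.1 - z.1‖ + |w.2 - z.2|) ^ 2) := by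
      rw [Real.exp_le_exp, neg_div]
      exact hDS
    calc (C ^ 2 * exp (-D / 2)) * B ≤ (C ^ 2 * exp (-(1/4) * (‖w.1 - z.1‖ + |w.2 - z.2|) ^ 2)) * B := by
          apply mul_le_mul_of_nonneg_right _ hB
          exact mul_le_mul_of_nonneg_left hexp (by positivity)
      _ ≤ C ^ 2 * (B + 1) * exp (-(1/4) * (‖w.1 - z.1‖ + |w.2 - z.2|) ^ 2) := by
          have := exp_pos (-(1/4) * (‖w.1 - z.1‖ + |w.2 - z.2|) ^ 2)
          nlinarith [sq_nonneg C, this.le]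
  linarith [step1, step2, step3.le, step4, step5, step3.ge]
end
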